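/- Let M^λ be the compiled model built from a robot model M^R and a human model M^H sharing fluent set F. For every valid plan π^H of M^H and every valid plan π^R of M^R, there exists a valid plan π^λ of M^λ such that H(π^λ) = π^H, R(π^λ) = π^R, exactly one check action fires for each fluent f_i ∈ F^R, and the number of check disagreement actions in π^λ equals |GSD(π^H, M^H, π^R, M^R)|, the cardinality of the symmetric difference of the final states of the two plans. -/

import Mathlib

/-- A STRIPS-style action over fluent type `F`: positive/negative preconditions
and add/delete effects. -/
structure Act (F : Type) where
  prePos : Finset F
  preNeg : Finset F
  addE : Finset F
  delE : Finset F
deriving DecidableEq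

/-- A planning model `M = ⟨F, A, c, I, G⟩`. -/
structure PModel (F : Type) [DecidableEq F] where
  fluents : Finset F
  actions : Finset (Act F)
  cost : Act F → ℕ
  init : Finset F
  goal : Finset F

variable {F : Type} [DecidableEq F]

/-- Action `a` is executable in state `s`. -/
def execAct (s : Finset F) (a : Act F) : Prop :=
  a.prePos ⊆ s ∧ a.preNeg ∩ s = ∅

/-- Transition of one action. -/
def stepAct (s : Finset F) (a : Act F) : Finset F :=
  (s ∪ a.addE) \ a.delE

/-- Transition extended to action sequences. -/
def runSeq (s : Finset F) : List (Act F) → Finset F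
  | [] => s
  | a :: π => runSeq (stepAct s a) π

/-- The action sequence is executable in order from state `s`, using actions of `M`. -/
def ExecFrom (M : PModel F) : Finset F → List (Act F) → Prop
  | _, [] => True
  | s, a :: π => a ∈ M.actions ∧ execAct s a ∧ ExecFrom M (stepAct s a) π

/-- A plan for `M`: executable from the initial state and achieving the goal. -/
def IsPlan (M : PModel F) (π : List (Act F)) : Prop :=
  ExecFrom M M.init π ∧ M.goal ⊆ runSeq M.init π

/-- Cost of a plan. -/
def planCost (M : PModel F) (π : List (Act F)) : ℕ :=
  (π.map M.cost).sum

/-- Cost-optimal plan. -/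
def IsOptimal (M : PModel F) (π : List (Act F)) : Prop :=
  IsPlan M π ∧ ∀ π', IsPlan M π' → planCost M π ≤ planCost M π'

/-- Goal state divergence of plans `π1` of `M1` and `π2` of `M2`:
the symmetric difference of the two final states. -/
def GSD (M1 M2 : PModel F) (π1 π2 : List (Act F)) : Finset F :=
  (runSeq M1.init π1 \ runSeq M2.init π2) ∪ (runSeq M2.init π2 \ runSeq M1.init π1)

/-- All achievable values `|GSD(π1, M1, π2, M2)|` over pairs of valid plans. -/
def gsdVals (M1 M2 : PModel F) : Set ℕ :=
  { n | ∃ π1 π2, IsPlan M1 π1 ∧ IsPlan M2 π2 ∧ n = (GSD M1 M2 π1 π2).card }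

/-- Maximal (worst-case) goal state divergence `GD↑(M1, M2)`. -/
noncomputable def GDup (M1 M2 : PModel F) : ℕ := sSup (gsdVals M1 M2)

/-- Minimal (best-case) goal state divergence `GD↓(M1, M2)`. -/
noncomputable def GDdown (M1 M2 : PModel F) : ℕ := sInf (gsdVals M1 M2)

/-- Fluents of the compiled model `M^λ`: the robot copy `F^R`, the disjoint human copy
`F^H`, the housekeeping fluents `robot_can_act`/`human_can_act`, and one compare fluent
`f^κ` per original fluent. -/
inductive LF (F : Type) where
  | robot : F → LF F
  | human : F → LF F
  | robotCanAct : LF F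
  | humanCanAct : LF F
  | compare : F → LF F
deriving DecidableEq

variable {F : Type} [DecidableEq F] in
/-- A robot action of `M^R` lifted into the compiled model: expressed in the robot copy of
the fluents, with `robot_can_act` added as a positive precondition. -/
def liftR (a : Act F) : Act (LF F) where
  prePos := a.prePos.image LF.robot ∪ {LF.robotCanAct}
  preNeg := a.preNeg.image LF.robot
  addE := a.addE.image LF.robot
  delE := a.delE.image LF.robot

variable {F : Type} [DecidableEq F] in
/-- A human action of `M^H` lifted into the compiled model: expressed in the human copy of
the fluents, with `human_can_act` added as a positive precondition. -/
def liftH (a : Act F) : Act (LF F) where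
  prePos := a.prePos.image LF.human ∪ {LF.humanCanAct}
  preNeg := a.preNeg.image LF.human
  addE := a.addE.image LF.human
  delE := a.delE.image LF.human

variable {F : Type} [DecidableEq F] in
/-- The human flip action: requires the human copy of the goal and `human_can_act`;
deletes `human_can_act` and adds `robot_can_act`. -/
def flipH (MH : PModel F) : Act (LF F) where
  prePos := MH.goal.image LF.human ∪ {LF.humanCanAct}
  preNeg := ∅
  addE := {LF.robotCanAct}
  delE := {LF.humanCanAct}

variable {F : Type} [DecidableEq F] in
/-- The robot flip action: requires the robot goal and `robot_can_act`;
deletes `robot_can_act`. -/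
def flipR (MR : PModel F) : Act (LF F) where
  prePos := MR.goal.image LF.robot ∪ {LF.robotCanAct}
  preNeg := ∅
  addE := ∅
  delE := {LF.robotCanAct}

variable {F : Type} [DecidableEq F] in
/-- Check disagreement action `a^1_{f}`: fires when `f` holds for the robot but not in the
human copy; adds the compare fluent `f^κ`. -/
def chk1 (f : F) : Act (LF F) where
  prePos := {LF.robot f}
  preNeg := {LF.human f, LF.robotCanAct, LF.humanCanAct, LF.compare f}
  addE := {LF.compare f}
  delE := ∅

variable {F : Type} [DecidableEq F] in
/-- Check disagreement action `a^2_{f}`: fires when `f` holds in the human copy but not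
for the robot; adds the compare fluent `f^κ`. -/
def chk2 (f : F) : Act (LF F) where
  prePos := {LF.human f}
  preNeg := {LF.robot f, LF.robotCanAct, LF.humanCanAct, LF.compare f}
  addE := {LF.compare f}
  delE := ∅

variable {F : Type} [DecidableEq F] in
/-- Check agreement action `a^3_{f}`: fires when `f` holds in both copies; adds `f^κ`. -/
def chk3 (f : F) : Act (LF F) where
  prePos := {LF.robot f, LF.human f}
  preNeg := {LF.robotCanAct, LF.humanCanAct, LF.compare f}
  addE := {LF.compare f}
  delE := ∅

variable {F : Type} [DecidableEq F] in
/-- Check agreement action `a^4_{f}`: fires when `f` holds in neither copy; adds `f^κ`. -/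
def chk4 (f : F) : Act (LF F) where
  prePos := ∅
  preNeg := {LF.robot f, LF.human f, LF.robotCanAct, LF.humanCanAct, LF.compare f}
  addE := {LF.compare f}
  delE := ∅

variable {F : Type} [DecidableEq F] in
/-- The compiled model `M^λ` for the pair `⟨M^R, M^H⟩` (sharing fluent set `F = F^R`),
with cost function `c`: lifted robot and human actions, the two flip actions, and the four
check actions per fluent; initial state `I^R ∪ I^H ∪ {human_can_act}`; goal
`G^R ∪ G^H ∪ F^κ`. -/
def compiled (MR MH : PModel F) (c : Act (LF F) → ℕ) : PModel (LF F) where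
  fluents := MR.fluents.image LF.robot ∪ MR.fluents.image LF.human ∪
    {LF.robotCanAct, LF.humanCanAct} ∪ MR.fluents.image LF.compare
  actions := MR.actions.image liftR ∪ MH.actions.image liftH ∪
    {flipH MH, flipR MR} ∪ MR.fluents.image chk1 ∪ MR.fluents.image chk2 ∪
    MR.fluents.image chk3 ∪ MR.fluents.image chk4
  cost := c
  init := MR.init.image LF.robot ∪ MH.init.image LF.human ∪ {LF.humanCanAct}
  goal := MR.goal.image LF.robot ∪ MH.goal.image LF.human ∪ MR.fluents.image LF.compare

variable {F : Type} [DecidableEq F] in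
/-- `H(π^λ)`: the subsequence of human-copy actions appearing in `π^λ`. -/
def humanPart (MH : PModel F) (π : List (Act (LF F))) : List (Act (LF F)) :=
  π.filter (fun a => decide (a ∈ MH.actions.image liftH))

variable {F : Type} [DecidableEq F] in
/-- `R(π^λ)`: the subsequence of robot actions appearing in `π^λ`. -/
def robotPart (MR : PModel F) (π : List (Act (LF F))) : List (Act (LF F)) :=
  π.filter (fun a => decide (a ∈ MR.actions.image liftR))

variable {F : Type} [DecidableEq F] in
/-- `|κ⁻(π^λ)|`: the number of check disagreement actions occurring in `π^λ`. -/
def disCount (MR : PModel F) (π : List (Act (LF F))) : ℕ :=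
  π.countP (fun a => decide (∃ f ∈ MR.fluents, a = chk1 f ∨ a = chk2 f))

variable {F : Type} [DecidableEq F] in
/-- `|κ⁺(π^λ)|`: the number of check agreement actions occurring in `π^λ`. -/
def agrCount (MR : PModel F) (π : List (Act (LF F))) : ℕ :=
  π.countP (fun a => decide (∃ f ∈ MR.fluents, a = chk3 f ∨ a = chk4 f))

variable {F : Type} [DecidableEq F] in
/-- A well-formed planning model: initial state, goal, and all action components are
contained in the fluent set. -/
def WellFormed (M : PModel F) : Prop :=
  M.init ⊆ M.fluents ∧ M.goal ⊆ M.fluents ∧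
  ∀ a ∈ M.actions,
    a.prePos ⊆ M.fluents ∧ a.preNeg ⊆ M.fluents ∧
    a.addE ⊆ M.fluents ∧ a.delE ⊆ M.fluents

/-! The compiled plan runs `π^H` on the human copy, flips, runs `π^R` on the robot copy, flips
again, and finally fires, for each fluent `f`, the one check action whose preconditions match the
truth values of `f` in the two final states. Lifted actions act on their copy of the fluents
exactly as the original actions act on `F`, so the check phase sees the final states of `π^R` and
`π^H`, and a disagreement check fires for `f` precisely when `f` lies in their symmetric
difference. -/

lemma Finset.countP_toList {α : Type*} (s : Finset α) (p : α → Prop) [DecidablePred p] :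
    s.toList.countP (fun a => decide (p a)) = (s.filter p).card := by
  rw [← Multiset.coe_countP, Finset.coe_toList, Multiset.countP_eq_card_filter]
  rfl

section Execution

variable {M : PModel F}

@[simp] lemma runSeq_nil (s : Finset F) : runSeq s [] = s := rfl

@[simp] lemma runSeq_cons (s : Finset F) (a : Act F) (l : List (Act F)) :
    runSeq s (a :: l) = runSeq (stepAct s a) l := rfl

lemma runSeq_append (s : Finset F) (l₁ l₂ : List (Act F)) :
    runSeq s (l₁ ++ l₂) = runSeq (runSeq s l₁) l₂ := by
  induction l₁ generalizing s with
  | nil => rfl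
  | cons a l ih => exact ih _

lemma ExecFrom.append {s : Finset F} {l₁ l₂ : List (Act F)} (h₁ : ExecFrom M s l₁)
    (h₂ : ExecFrom M (runSeq s l₁) l₂) : ExecFrom M s (l₁ ++ l₂) := by
  induction l₁ generalizing s with
  | nil => exact h₂
  | cons a l ih => exact ⟨h₁.1, h₁.2.1, ih h₁.2.2 h₂⟩

lemma ExecFrom.mem_actions {s : Finset F} {l : List (Act F)} (h : ExecFrom M s l) {a : Act F}
    (ha : a ∈ l) : a ∈ M.actions := by
  induction l generalizing s with
  | nil => simp at ha
  | cons b l ih =>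
    rcases List.mem_cons.mp ha with rfl | ha
    · exact h.1
    · exact ih h.2.2 ha

lemma ExecFrom.runSeq_subset_fluents (hM : WellFormed M) {s : Finset F} {l : List (Act F)}
    (h : ExecFrom M s l) (hs : s ⊆ M.fluents) : runSeq s l ⊆ M.fluents := by
  induction l generalizing s with
  | nil => exact hs
  | cons a l ih =>
    refine ih h.2.2 fun x hx => ?_
    rcases Finset.mem_union.mp (Finset.mem_sdiff.mp hx).1 with hx | hx
    · exact hs hx
    · exact (hM.2.2 a h.1).2.2.1 hx

lemma IsPlan.runSeq_subset_fluents (hM : WellFormed M) {π : List (Act F)} (h : IsPlan M π) :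
    runSeq M.init π ⊆ M.fluents :=
  h.1.runSeq_subset_fluents hM hM.1

end Execution

section CompiledState

def compiledState (sR sH : Finset F) (r h : Bool) (K : Finset F) : Finset (LF F) :=
  sR.image LF.robot ∪ sH.image LF.human ∪
    ((if r then {LF.robotCanAct} else ∅) ∪ (if h then {LF.humanCanAct} else ∅)) ∪
    K.image LF.compare

variable {sR sH K : Finset F} {r h : Bool} {f : F}

@[simp] lemma robot_mem_compiledState : LF.robot f ∈ compiledState sR sH r h K ↔ f ∈ sR := by
  cases r <;> cases h <;> simp [compiledState]

@[simp] lemma human_mem_compiledState : LF.human f ∈ compiledState sR sH r h K ↔ f ∈ sH := by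
  cases r <;> cases h <;> simp [compiledState]

@[simp] lemma compare_mem_compiledState :
    LF.compare f ∈ compiledState sR sH r h K ↔ f ∈ K := by
  cases r <;> cases h <;> simp [compiledState]

@[simp] lemma robotCanAct_mem_compiledState :
    LF.robotCanAct ∈ compiledState sR sH r h K ↔ r = true := by
  cases r <;> cases h <;> simp [compiledState]

@[simp] lemma humanCanAct_mem_compiledState :
    LF.humanCanAct ∈ compiledState sR sH r h K ↔ h = true := by
  cases r <;> cases h <;> simp [compiledState]

lemma compiled_init (MR MH : PModel F) (c : Act (LF F) → ℕ) :
    (compiled MR MH c).init = compiledState MR.init MH.init false true ∅ := by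
  ext x; cases x <;> simp [compiled]

lemma compiled_goal_subset {MR MH : PModel F} {c : Act (LF F) → ℕ} (hR : MR.goal ⊆ sR)
    (hH : MH.goal ⊆ sH) :
    (compiled MR MH c).goal ⊆ compiledState sR sH r h MR.fluents := by
  intro x hx
  simp only [compiled, Finset.mem_union, Finset.mem_image] at hx
  rcases hx with (⟨f, hf, rfl⟩ | ⟨f, hf, rfl⟩) | ⟨f, hf, rfl⟩
  · simpa using hR hf
  · simpa using hH hf
  · simpa using hf

end CompiledState

section Phases

variable {MR MH : PModel F} {c : Act (LF F) → ℕ} {sR sH K : Finset F} {r h : Bool}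

lemma liftH_mem_compiled {a : Act F} (ha : a ∈ MH.actions) :
    liftH a ∈ (compiled MR MH c).actions := by
  grind [compiled]

lemma liftR_mem_compiled {a : Act F} (ha : a ∈ MR.actions) :
    liftR a ∈ (compiled MR MH c).actions := by
  grind [compiled]

lemma flipH_mem_compiled : flipH MH ∈ (compiled MR MH c).actions := by
  simp [compiled]

lemma flipR_mem_compiled : flipR MR ∈ (compiled MR MH c).actions := by
  simp [compiled]

lemma stepAct_liftH (a : Act F) :
    stepAct (compiledState sR sH r h K) (liftH a) = compiledState sR (stepAct sH a) r h K := by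
  ext x; cases x <;> simp [stepAct, liftH]

lemma stepAct_liftR (a : Act F) :
    stepAct (compiledState sR sH r h K) (liftR a) = compiledState (stepAct sR a) sH r h K := by
  ext x; cases x <;> simp [stepAct, liftR]

lemma execAct_liftH {a : Act F} (ha : execAct sH a) :
    execAct (compiledState sR sH r true K) (liftH a) := by
  obtain ⟨hpos, hneg⟩ := ha
  refine ⟨fun x hx => ?_, Finset.eq_empty_of_forall_notMem fun x hx => ?_⟩
  · simp only [liftH, Finset.mem_union, Finset.mem_image, Finset.mem_singleton] at hx
    rcases hx with ⟨f, hf, rfl⟩ | rfl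
    · simpa using hpos hf
    · simp
  · simp only [liftH, Finset.mem_inter, Finset.mem_image] at hx
    obtain ⟨⟨f, hf, rfl⟩, hmem⟩ := hx
    exact Finset.notMem_empty f (hneg ▸ Finset.mem_inter.mpr ⟨hf, by simpa using hmem⟩)

lemma execAct_liftR {a : Act F} (ha : execAct sR a) :
    execAct (compiledState sR sH true h K) (liftR a) := by
  obtain ⟨hpos, hneg⟩ := ha
  refine ⟨fun x hx => ?_, Finset.eq_empty_of_forall_notMem fun x hx => ?_⟩
  · simp only [liftR, Finset.mem_union, Finset.mem_image, Finset.mem_singleton] at hx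
    rcases hx with ⟨f, hf, rfl⟩ | rfl
    · simpa using hpos hf
    · simp
  · simp only [liftR, Finset.mem_inter, Finset.mem_image] at hx
    obtain ⟨⟨f, hf, rfl⟩, hmem⟩ := hx
    exact Finset.notMem_empty f (hneg ▸ Finset.mem_inter.mpr ⟨hf, by simpa using hmem⟩)

lemma runSeq_map_liftH (π : List (Act F)) :
    runSeq (compiledState sR sH r h K) (π.map liftH) =
      compiledState sR (runSeq sH π) r h K := by
  induction π generalizing sH with
  | nil => rfl
  | cons a π ih => simp only [List.map_cons, runSeq_cons, stepAct_liftH, ih]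

lemma runSeq_map_liftR (π : List (Act F)) :
    runSeq (compiledState sR sH r h K) (π.map liftR) =
      compiledState (runSeq sR π) sH r h K := by
  induction π generalizing sR with
  | nil => rfl
  | cons a π ih => simp only [List.map_cons, runSeq_cons, stepAct_liftR, ih]

lemma ExecFrom.map_liftH {π : List (Act F)} (hπ : ExecFrom MH sH π) :
    ExecFrom (compiled MR MH c) (compiledState sR sH r true K) (π.map liftH) := by
  induction π generalizing sH with
  | nil => trivial
  | cons a π ih =>
    refine ⟨liftH_mem_compiled hπ.1, execAct_liftH hπ.2.1, ?_⟩
    rw [stepAct_liftH]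
    exact ih hπ.2.2

lemma ExecFrom.map_liftR {π : List (Act F)} (hπ : ExecFrom MR sR π) :
    ExecFrom (compiled MR MH c) (compiledState sR sH true h K) (π.map liftR) := by
  induction π generalizing sR with
  | nil => trivial
  | cons a π ih =>
    refine ⟨liftR_mem_compiled hπ.1, execAct_liftR hπ.2.1, ?_⟩
    rw [stepAct_liftR]
    exact ih hπ.2.2

lemma stepAct_flipH :
    stepAct (compiledState sR sH r true K) (flipH MH) = compiledState sR sH true false K := by
  ext x; cases x <;> simp [stepAct, flipH]

lemma stepAct_flipR :
    stepAct (compiledState sR sH true h K) (flipR MR) = compiledState sR sH false h K := by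
  ext x; cases x <;> simp [stepAct, flipR]

lemma execAct_flipH (hg : MH.goal ⊆ sH) :
    execAct (compiledState sR sH r true K) (flipH MH) := by
  refine ⟨fun x hx => ?_, by simp [flipH]⟩
  simp only [flipH, Finset.mem_union, Finset.mem_image, Finset.mem_singleton] at hx
  rcases hx with ⟨f, hf, rfl⟩ | rfl
  · simpa using hg hf
  · simp

lemma execAct_flipR (hg : MR.goal ⊆ sR) :
    execAct (compiledState sR sH true h K) (flipR MR) := by
  refine ⟨fun x hx => ?_, by simp [flipR]⟩
  simp only [flipR, Finset.mem_union, Finset.mem_image, Finset.mem_singleton] at hx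
  rcases hx with ⟨f, hf, rfl⟩ | rfl
  · simpa using hg hf
  · simp

end Phases

section Checks

def checkAct (sR sH : Finset F) (f : F) : Act (LF F) :=
  if f ∈ sR then (if f ∈ sH then chk3 f else chk1 f)
  else (if f ∈ sH then chk2 f else chk4 f)

variable {MR MH : PModel F} {c : Act (LF F) → ℕ} {sR sH K : Finset F} {r h : Bool} {f g : F}

lemma addE_eq_of_isCheck {a : Act (LF F)}
    (ha : a = chk1 f ∨ a = chk2 f ∨ a = chk3 f ∨ a = chk4 f) : a.addE = {LF.compare f} := by
  rcases ha with rfl | rfl | rfl | rfl <;> rfl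

lemma checkAct_isCheck (sR sH : Finset F) (f : F) :
    let a := checkAct sR sH f; a = chk1 f ∨ a = chk2 f ∨ a = chk3 f ∨ a = chk4 f := by
  unfold checkAct; split_ifs <;> simp

lemma checkAct_addE : (checkAct sR sH f).addE = {LF.compare f} :=
  addE_eq_of_isCheck (checkAct_isCheck sR sH f)

lemma checkAct_isCheck_iff :
    (checkAct sR sH g = chk1 f ∨ checkAct sR sH g = chk2 f ∨ checkAct sR sH g = chk3 f ∨
      checkAct sR sH g = chk4 f) ↔ g = f := by
  refine ⟨fun hgf => ?_, fun hgf => hgf ▸ checkAct_isCheck sR sH g⟩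
  simpa [checkAct_addE] using addE_eq_of_isCheck hgf

lemma chk3_ne_chk1 : chk3 g ≠ chk1 f := fun he => by
  simpa [chk3, chk1] using congrArg (LF.human g ∈ ·.prePos) he

lemma chk3_ne_chk2 : chk3 g ≠ chk2 f := fun he => by
  simpa [chk3, chk2] using congrArg (LF.robot g ∈ ·.prePos) he

lemma chk4_ne_chk1 : chk4 g ≠ chk1 f := fun he => by
  simpa [chk4, chk1] using congrArg (·.prePos) he

lemma chk4_ne_chk2 : chk4 g ≠ chk2 f := fun he => by
  simpa [chk4, chk2] using congrArg (·.prePos) he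

lemma checkAct_isDisagreement_iff :
    (checkAct sR sH g = chk1 f ∨ checkAct sR sH g = chk2 f) ↔ g = f ∧ g ∈ sH \ sR ∪ sR \ sH := by
  constructor
  · intro hdis
    obtain rfl : g = f := checkAct_isCheck_iff.mp (by tauto)
    by_cases hR : g ∈ sR <;> by_cases hH : g ∈ sH <;>
      simp_all [checkAct, chk3_ne_chk1, chk3_ne_chk2, chk4_ne_chk1, chk4_ne_chk2]
  · rintro ⟨rfl, hg⟩
    by_cases hR : g ∈ sR <;> by_cases hH : g ∈ sH <;> simp_all [checkAct]

lemma stepAct_of_isCheck {a : Act (LF F)} (S : Finset (LF F))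
    (ha : a = chk1 f ∨ a = chk2 f ∨ a = chk3 f ∨ a = chk4 f) :
    stepAct S a = insert (LF.compare f) S := by
  rcases ha with rfl | rfl | rfl | rfl <;> simp [stepAct, chk1, chk2, chk3, chk4]

lemma stepAct_checkAct (sR' sH' : Finset F) (f : F) :
    stepAct (compiledState sR sH r h K) (checkAct sR' sH' f) =
      compiledState sR sH r h (insert f K) := by
  rw [stepAct_of_isCheck _ (checkAct_isCheck sR' sH' f)]
  ext x; cases x <;> simp [eq_comm]

lemma execAct_checkAct (hf : f ∉ K) :
    execAct (compiledState sR sH false false K) (checkAct sR sH f) := by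
  by_cases hR : f ∈ sR <;> by_cases hH : f ∈ sH <;>
    simp [checkAct, hR, hH, execAct, chk1, chk2, chk3, chk4, Finset.subset_iff, hf]

lemma checkAct_mem_compiled (hf : f ∈ MR.fluents) :
    checkAct sR sH f ∈ (compiled MR MH c).actions := by
  unfold checkAct; split_ifs <;> grind [compiled]

lemma runSeq_map_checkAct (sR' sH' : Finset F) (L : List F) :
    runSeq (compiledState sR sH r h K) (L.map (checkAct sR' sH')) =
      compiledState sR sH r h (K ∪ L.toFinset) := by
  induction L generalizing K with
  | nil => simp
  | cons f L ih => simp [stepAct_checkAct, ih, Finset.insert_union, Finset.union_insert]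

lemma ExecFrom.map_checkAct {L : List F} (hL : L.Nodup) (hLF : ∀ f ∈ L, f ∈ MR.fluents)
    (hLK : ∀ f ∈ L, f ∉ K) :
    ExecFrom (compiled MR MH c) (compiledState sR sH false false K) (L.map (checkAct sR sH)) := by
  induction L generalizing K with
  | nil => trivial
  | cons f L ih =>
    simp only [List.nodup_cons, List.mem_cons, forall_eq_or_imp] at hL hLF hLK
    refine ⟨checkAct_mem_compiled hLF.1, execAct_checkAct hLK.1, ?_⟩
    rw [stepAct_checkAct]
    exact ih hL.2 hLF.2 fun g hg => by
      simpa [Finset.mem_insert] using ⟨fun e => hL.1 (e ▸ hg), hLK.2 g hg⟩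

end Checks

section Distinctness

variable (a b : Act F) (M : PModel F) (sR sH : Finset F) (f : F)

lemma liftH_ne_liftR : liftH a ≠ liftR b := fun he => by
  simpa [liftH, liftR] using congrArg (LF.humanCanAct ∈ ·.prePos) he

lemma liftH_ne_flipH : liftH a ≠ flipH M := fun he => by
  simpa [liftH, flipH] using congrArg (LF.robotCanAct ∈ ·.addE) he

lemma liftH_ne_flipR : liftH a ≠ flipR M := fun he => by
  simpa [liftH, flipR] using congrArg (LF.robotCanAct ∈ ·.prePos) he

lemma liftR_ne_flipH : liftR a ≠ flipH M := fun he => by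
  simpa [liftR, flipH] using congrArg (LF.humanCanAct ∈ ·.prePos) he

lemma liftR_ne_flipR : liftR a ≠ flipR M := fun he => by
  simpa [liftR, flipR] using congrArg (LF.robotCanAct ∈ ·.delE) he

lemma compare_notMem_liftH_addE : LF.compare f ∉ (liftH a).addE := by simp [liftH]

lemma compare_notMem_liftR_addE : LF.compare f ∉ (liftR a).addE := by simp [liftR]

lemma compare_notMem_flipH_addE : LF.compare f ∉ (flipH M).addE := by simp [flipH]

lemma compare_notMem_flipR_addE : LF.compare f ∉ (flipR M).addE := by simp [flipR]

lemma liftH_ne_checkAct : liftH a ≠ checkAct sR sH f := fun he =>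
  compare_notMem_liftH_addE a f (by simp [he, checkAct_addE])

lemma liftR_ne_checkAct : liftR a ≠ checkAct sR sH f := fun he =>
  compare_notMem_liftR_addE a f (by simp [he, checkAct_addE])

end Distinctness

section CompiledPlan

variable {MR MH : PModel F} {c : Act (LF F) → ℕ} {πH πR : List (Act F)}

noncomputable def compiledPlan (MR MH : PModel F) (πH πR : List (Act F)) : List (Act (LF F)) :=
  πH.map liftH ++ flipH MH :: (πR.map liftR ++ flipR MR ::
    MR.fluents.toList.map (checkAct (runSeq MR.init πR) (runSeq MH.init πH)))

lemma runSeq_compiledPlan :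
    runSeq (compiled MR MH c).init (compiledPlan MR MH πH πR) =
      compiledState (runSeq MR.init πR) (runSeq MH.init πH) false false MR.fluents := by
  rw [compiled_init, compiledPlan, runSeq_append, runSeq_map_liftH, runSeq_cons, stepAct_flipH,
    runSeq_append, runSeq_map_liftR, runSeq_cons, stepAct_flipR, runSeq_map_checkAct,
    Finset.empty_union, Finset.toList_toFinset]

lemma isPlan_compiledPlan (hH : IsPlan MH πH) (hR : IsPlan MR πR) :
    IsPlan (compiled MR MH c) (compiledPlan MR MH πH πR) := by
  refine ⟨?_, by rw [runSeq_compiledPlan]; exact compiled_goal_subset hR.2 hH.2⟩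
  rw [compiled_init, compiledPlan]
  refine hH.1.map_liftH.append ?_
  rw [runSeq_map_liftH]
  refine ⟨flipH_mem_compiled, execAct_flipH hH.2, ?_⟩
  rw [stepAct_flipH]
  refine hR.1.map_liftR.append ?_
  rw [runSeq_map_liftR]
  refine ⟨flipR_mem_compiled, execAct_flipR hR.2, ?_⟩
  rw [stepAct_flipR]
  exact .map_checkAct (Finset.nodup_toList _) (fun f => Finset.mem_toList.1) (by simp)

lemma humanPart_compiledPlan (hH : ExecFrom MH MH.init πH) :
    humanPart MH (compiledPlan MR MH πH πR) = πH.map liftH := by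
  rw [humanPart, compiledPlan, List.filter_append, List.filter_eq_self.2, List.filter_eq_nil_iff.2,
    List.append_nil]
  · simp only [List.mem_cons, List.mem_append, List.mem_map]
    rintro a (rfl | ⟨b, -, rfl⟩ | rfl | ⟨g, -, rfl⟩) <;>
      simp [liftH_ne_flipH, liftH_ne_liftR, liftH_ne_flipR, liftH_ne_checkAct]
  · simp only [List.mem_map]
    rintro _ ⟨b, hb, rfl⟩
    simpa using ⟨b, hH.mem_actions hb, rfl⟩

lemma robotPart_compiledPlan (hR : ExecFrom MR MR.init πR) :
    robotPart MR (compiledPlan MR MH πH πR) = πR.map liftR := by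
  rw [robotPart, compiledPlan, List.filter_append, List.filter_eq_nil_iff.2, List.nil_append,
    List.filter_cons_of_neg, List.filter_append, List.filter_eq_self.2, List.filter_cons_of_neg,
    List.filter_eq_nil_iff.2, List.append_nil]
  · simp only [List.mem_map]
    rintro _ ⟨g, -, rfl⟩
    simp [liftR_ne_checkAct]
  · simp [liftR_ne_flipR]
  · simp only [List.mem_map]
    rintro _ ⟨b, hb, rfl⟩
    simpa using ⟨b, hR.mem_actions hb, rfl⟩
  · simp [liftR_ne_flipH]
  · simp only [List.mem_map]
    rintro _ ⟨b, -, rfl⟩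
    simp [(liftH_ne_liftR _ _).symm]

lemma countP_compiledPlan (p : Act (LF F) → Bool) (hp : ∀ a, p a → ∃ f, LF.compare f ∈ a.addE) :
    (compiledPlan MR MH πH πR).countP p =
      (MR.fluents.toList.map (checkAct (runSeq MR.init πR) (runSeq MH.init πH))).countP p := by
  have hfalse : ∀ a, (∀ f, LF.compare f ∉ a.addE) → p a = false := fun a ha => by
    by_contra hp'
    obtain ⟨f, hf⟩ := hp a (by simpa using hp')
    exact ha f hf
  simp [compiledPlan, Function.comp_def, hfalse, compare_notMem_liftH_addE,
    compare_notMem_liftR_addE, compare_notMem_flipH_addE, compare_notMem_flipR_addE]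

lemma countP_isCheck_compiledPlan {f : F} (hf : f ∈ MR.fluents) :
    (compiledPlan MR MH πH πR).countP
      (fun a => decide (a = chk1 f ∨ a = chk2 f ∨ a = chk3 f ∨ a = chk4 f)) = 1 := by
  rw [countP_compiledPlan _ fun a ha => ⟨f, by simp [addE_eq_of_isCheck (of_decide_eq_true ha)]⟩,
    List.countP_map]
  simp only [Function.comp_def, checkAct_isCheck_iff]
  rw [Finset.countP_toList, Finset.filter_eq', if_pos hf, Finset.card_singleton]

lemma disCount_compiledPlan :
    disCount MR (compiledPlan MR MH πH πR) = (MR.fluents ∩ GSD MH MR πH πR).card := by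
  rw [disCount, countP_compiledPlan _ fun a ha => ?_, List.countP_map]
  · simp only [Function.comp_def, checkAct_isDisagreement_iff]
    rw [Finset.countP_toList, ← Finset.filter_mem_eq_inter]
    exact congrArg Finset.card (Finset.filter_congr fun g hg => by simp [hg, GSD])
  · obtain ⟨f, -, hf⟩ := of_decide_eq_true ha
    exact ⟨f, by simp [addE_eq_of_isCheck (hf.imp_right Or.inl)]⟩

end CompiledPlan

/-- for every valid plan `π^H` of `M^H` and every valid plan `π^R` of `M^R`,
there is a valid plan `π^λ` of the compiled model `M^λ` with `H(π^λ) = π^H`,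
`R(π^λ) = π^R`, in which exactly one check action fires for each fluent `f ∈ F^R`, and the
number of check disagreement actions equals `|GSD(π^H, M^H, π^R, M^R)|`. -/
theorem compiled_plan_exists {F : Type} [DecidableEq F]
    (MR MH : PModel F) (c : Act (LF F) → ℕ)
    (hsh : MH.fluents = MR.fluents)
    (hwfR : WellFormed MR) (hwfH : WellFormed MH)
    (πH πR : List (Act F)) (hπH : IsPlan MH πH) (hπR : IsPlan MR πR) :
    ∃ π : List (Act (LF F)),
      IsPlan (compiled MR MH c) π ∧
      humanPart MH π = πH.map liftH ∧
      robotPart MR π = πR.map liftR ∧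
      (∀ f ∈ MR.fluents,
        π.countP (fun a => decide (a = chk1 f ∨ a = chk2 f ∨ a = chk3 f ∨ a = chk4 f)) = 1) ∧
      disCount MR π = (GSD MH MR πH πR).card := by
  have hGSD : GSD MH MR πH πR ⊆ MR.fluents :=
    Finset.union_subset (Finset.sdiff_subset.trans (hsh ▸ hπH.runSeq_subset_fluents hwfH))
      (Finset.sdiff_subset.trans (hπR.runSeq_subset_fluents hwfR))
  refine ⟨compiledPlan MR MH πH πR, isPlan_compiledPlan hπH hπR, humanPart_compiledPlan hπH.1,
    robotPart_compiledPlan hπR.1, fun f hf => countP_isCheck_compiledPlan hf, ?_⟩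
  rw [disCount_compiledPlan, Finset.inter_eq_right.2 hGSD]
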